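/- arXiv:2503.16884 — 7 statements merged into one kernel-verified Lean document; each statement's English description precedes it below -/
import Mathlib

section
/- If p is a prime, k a positive integer, and P = 2^(r-1) * (2^r - 1) is an even perfect number (with r ≥ 2 and 2^r - 1 prime), then the equation P + 1 = p^k implies k = 1. -/
theorem perfect_plus_one_prime_power_exponent_eq_one
    (p k r : ℕ) (hp : p.Prime) (hk : 0 < k) (hr : 2 ≤ r)
    (hmersenne : Nat.Prime (2 ^ r - 1))
    (h : 2 ^ (r - 1) * (2 ^ r - 1) + 1 = p ^ k) :
    k = 1 := by
  by_contra hk1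
  have hk2 : 2 ≤ k := by omega
  obtain ⟨q, hqdef⟩ : ∃ q, q = 2 ^ r - 1 := ⟨_, rfl⟩
  rw [← hqdef] at hmersenne h
  have hq1 : 2 ≤ q := hmersenne.two_le
  have hqodd : Odd q := by
    have h4 : (4:ℕ) ∣ 2 ^ r := by
      have : (2:ℕ)^2 ∣ 2 ^ r := pow_dvd_pow 2 hr
      simpa using this
    obtain ⟨c, hc⟩ := h4
    exact ⟨2*c - 1, by omega⟩
  -- 2^(r-1) is even
  have hev : 2 ∣ 2 ^ (r-1) := dvd_pow_self 2 (by omega)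
  -- p is odd
  have hpodd : Odd p := by
    rcases hp.eq_two_or_odd' with rfl | hodd
    · exfalso
      obtain ⟨e, he⟩ := hev
      have h2 : 2 ∣ 2 ^ k := dvd_pow_self 2 (by omega)
      obtain ⟨d, hd⟩ := h2
      have : Odd (2 ^ k) := by
        rw [← h, he]
        exact ⟨e * q, by ring⟩
      obtain ⟨t, ht⟩ := this
      omega
    · exact hodd
  have hp3 : 3 ≤ p := by
    have := hp.two_le
    rcases hpodd with ⟨t, ht⟩
    omega
  rcases Nat.even_or_odd k with hke | hko
  · -- k even : k = 2*m
    obtain ⟨m, hm⟩ := hke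
    have hm1 : 1 ≤ m := by omega
    obtain ⟨c, hcdef⟩ : ∃ c, c = p ^ m := ⟨_, rfl⟩
    have hc3 : 3 ≤ c := hcdef ▸ le_trans hp3 (Nat.le_self_pow (by omega) p)
    have hcodd : Odd c := hcdef ▸ hpodd.pow
    have hpk : p ^ k = c * c := by
      rw [hcdef, hm, ← pow_add]
    have hab : (c - 1) * (c + 1) = 2 ^ (r-1) * q := by
      have h1 : (c - 1) * (c + 1) = c * c - 1 := by
        obtain ⟨d, hd⟩ : ∃ d, c = d + 1 := ⟨c - 1, by omega⟩
        subst hd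
        simp [Nat.add_sub_cancel]
        ring_nf
        omega
      rw [h1, ← hpk]
      omega
    have hqdvd : q ∣ (c - 1) * (c + 1) := hab ▸ Dvd.intro_left _ rfl
    have hgcd : ¬ (q ∣ (c-1) ∧ q ∣ (c+1)) := by
      rintro ⟨h1, h2⟩
      have hd : q ∣ (c+1) - (c-1) := Nat.dvd_sub h2 h1
      have h2' : (c+1) - (c-1) = 2 := by omega
      rw [h2'] at hd
      have := Nat.le_of_dvd (by norm_num) hd
      obtain ⟨t0, ht0⟩ := hqodd
      omega
    have habdvd1 : (c-1) ∣ 2 ^ (r-1) * q := hab ▸ dvd_mul_right _ _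
    have habdvd2 : (c+1) ∣ 2 ^ (r-1) * q := hab ▸ dvd_mul_left _ _
    rcases (Nat.Prime.dvd_mul hmersenne).mp hqdvd with hqa | hqb
    · -- q ∣ c - 1, so c + 1 is a power of 2
      have hcop : Nat.Coprime q (c+1) := by
        rw [Nat.Prime.coprime_iff_not_dvd hmersenne]
        exact fun hd => hgcd ⟨hqa, hd⟩
      have hbdvd2 : (c+1) ∣ 2 ^ (r-1) :=
        Nat.Coprime.dvd_of_dvd_mul_right hcop.symm habdvd2
      obtain ⟨t, hts, htval⟩ := (Nat.dvd_prime_pow Nat.prime_two).mp hbdvd2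
      have ht2 : 2 ≤ t := by
        by_contra hlt
        have h01 : t = 0 ∨ t = 1 := by omega
        rcases h01 with rfl | rfl <;> simp at htval <;> omega
      have hsplit : (2:ℕ) ^ t = 2 * 2 ^ (t-1) := by
        rw [← pow_succ']; congr 1; omega
      have hu2 : 2 ≤ 2 ^ (t-1) := by
        have : (2:ℕ)^1 ≤ 2 ^ (t-1) := Nat.pow_le_pow_right (by norm_num) (by omega)
        simpa using this
      obtain ⟨u, hu⟩ : ∃ u, u = 2 ^ (t-1) - 1 := ⟨_, rfl⟩
      have hca : c - 1 = 2 * u := by omega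
      have hudvd : u ∣ 2 ^ (r-1) * q :=
        dvd_trans ⟨2, by omega⟩ habdvd1
      have huodd : Odd u := by
        have h2d : 2 ∣ 2 ^ (t-1) := dvd_pow_self 2 (by omega)
        obtain ⟨e, he⟩ := h2d
        exact ⟨e - 1, by omega⟩
      have hucop : Nat.Coprime u (2 ^ (r-1)) :=
        Nat.Coprime.pow_right _ huodd.coprime_two_right
      have huq : u ∣ q := Nat.Coprime.dvd_of_dvd_mul_left hucop hudvd
      rcases Nat.Prime.eq_one_or_self_of_dvd hmersenne u huq with hu1 | huq'
      · -- u = 1 : t = 2, c = 3, so 8 = 2^(r-1)*q and q ∣ 8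
        have ht1 : 2 ^ (t-1) = 2 := by omega
        have htt : t = 2 := by
          have := Nat.pow_right_injective (le_refl 2) (ht1.trans (pow_one 2).symm)
          omega
        have hc3' : c = 3 := by
          rw [htt] at htval; norm_num at htval; omega
        rw [hc3'] at hab
        norm_num at hab
        have hq8 : q ∣ 8 := hab ▸ dvd_mul_left q (2^(r-1))
        have hq2 : q ∣ 2 := hmersenne.dvd_of_dvd_pow
          (show q ∣ 2^3 from (by norm_num : (8:ℕ) = 2^3) ▸ hq8)
        have := Nat.le_of_dvd (by norm_num) hq2
        obtain ⟨t', ht'⟩ := hqodd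
        omega
      · -- u = q : 2^(t-1) = 2^r, t = r+1, but 2^t ≤ 2^(r-1)
        have h2r2 : 2 ≤ 2 ^ r := by omega
        have h2t : 2 ^ (t-1) = 2 ^ r := by omega
        have htr : t - 1 = r := Nat.pow_right_injective (le_refl 2) h2t
        have hle : 2 ^ t ≤ 2 ^ (r-1) := by
          rw [← htval]
          exact Nat.le_of_dvd (by positivity) hbdvd2
        have : t ≤ r - 1 := (Nat.pow_le_pow_iff_right (by norm_num)).mp hle
        omega
    · -- q ∣ c + 1, so c - 1 is a power of 2
      have hcop : Nat.Coprime q (c-1) := by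
        rw [Nat.Prime.coprime_iff_not_dvd hmersenne]
        exact fun hd => hgcd ⟨hd, hqb⟩
      have hadvd2 : (c-1) ∣ 2 ^ (r-1) :=
        Nat.Coprime.dvd_of_dvd_mul_right hcop.symm habdvd1
      obtain ⟨s, hss, hsval⟩ := (Nat.dvd_prime_pow Nat.prime_two).mp hadvd2
      have hs1 : 1 ≤ s := by
        by_contra hs0
        have : s = 0 := by omega
        subst this; simp at hsval; omega
      by_cases hs2 : s = 1
      · -- c = 3, 8 = 2^(r-1)*q
        subst hs2
        have hc3' : c = 3 := by norm_num at hsval; omega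
        rw [hc3'] at hab
        norm_num at hab
        have hq8 : q ∣ 8 := hab ▸ dvd_mul_left q (2^(r-1))
        have hq2 : q ∣ 2 := hmersenne.dvd_of_dvd_pow
          (show q ∣ 2^3 from (by norm_num : (8:ℕ) = 2^3) ▸ hq8)
        have := Nat.le_of_dvd (by norm_num) hq2
        obtain ⟨t', ht'⟩ := hqodd
        omega
      · have hs2' : 2 ≤ s := by omega
        have hsplit : (2:ℕ) ^ s = 2 * 2 ^ (s-1) := by
          rw [← pow_succ']; congr 1; omega
        have hu2 : 2 ≤ 2 ^ (s-1) := by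
          have : (2:ℕ)^1 ≤ 2 ^ (s-1) := Nat.pow_le_pow_right (by norm_num) (by omega)
          simpa using this
        obtain ⟨u, hu⟩ : ∃ u, u = 2 ^ (s-1) + 1 := ⟨_, rfl⟩
        have hcb : c + 1 = 2 * u := by omega
        have hudvd : u ∣ 2 ^ (r-1) * q :=
          dvd_trans ⟨2, by omega⟩ habdvd2
        have huodd : Odd u := by
          have h2d : 2 ∣ 2 ^ (s-1) := dvd_pow_self 2 (by omega)
          obtain ⟨e, he⟩ := h2d
          exact ⟨e, by omega⟩
        have hucop : Nat.Coprime u (2 ^ (r-1)) :=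
          Nat.Coprime.pow_right _ huodd.coprime_two_right
        have huq : u ∣ q := Nat.Coprime.dvd_of_dvd_mul_left hucop hudvd
        have hu3 : 3 ≤ u := by omega
        rcases Nat.Prime.eq_one_or_self_of_dvd hmersenne u huq with hu1 | huq'
        · omega
        · -- 2^(s-1) + 1 = 2^r - 1, so 2^(s-1) = 2^r - 2 ≡ 2 mod 4
          have h2r2 : (2:ℕ)^2 ∣ 2 ^ r := pow_dvd_pow 2 hr
          obtain ⟨e, he⟩ := (by simpa using h2r2 : (4:ℕ) ∣ 2 ^ r)
          have h2rge : 4 ≤ 2 ^ r := Nat.le_of_dvd (by positivity) (by simpa using h2r2)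
          have hsv : 2 ^ (s-1) = 2 ^ r - 2 := by omega
          have hs1' : s - 1 = 1 := by
            by_contra hne
            have h2' : 2 ≤ s - 1 := by omega
            have : (4:ℕ) ∣ 2 ^ (s-1) := by
              have : (2:ℕ)^2 ∣ 2^(s-1) := pow_dvd_pow 2 h2'
              simpa using this
            obtain ⟨f, hf⟩ := this
            omega
          have hr2 : r = 2 := by
            have h21 : (2:ℕ) ^ (s-1) = 2 := by rw [hs1']; norm_num
            have h4 : 2 ^ r = 4 := by omega
            have := Nat.pow_right_injective (le_refl 2)
              (h4.trans (by norm_num : (4:ℕ) = 2^2))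
            omega
          -- then c - 1 = 2^s = 4 divides 2^(r-1) = 2
          have hss2 : s = 2 := by omega
          have hc14 : c - 1 = 4 := by rw [hss2] at hsval; norm_num at hsval; omega
          have h2r1 : (2:ℕ) ^ (r-1) = 2 := by rw [hr2]; norm_num
          have := Nat.le_of_dvd (by positivity) (hc14 ▸ hadvd2)
          rw [h2r1] at this
          omega
  · -- k odd, k ≥ 3
    have hk3 : 3 ≤ k := by
      rcases hko with ⟨j, hj⟩; omega
    obtain ⟨S, hSdef⟩ : ∃ S, S = ∑ i ∈ Finset.range k, p ^ i := ⟨_, rfl⟩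
    have hgeom : S * (p - 1) + 1 = p ^ k := by
      have hg := geom_sum_mul_add (p - 1) k
      have hp1 : p - 1 + 1 = p := by omega
      rw [hp1] at hg
      rw [hSdef]
      exact hg
    have hSq : S * (p - 1) = 2 ^ (r-1) * q := by omega
    have hSodd : Odd S := by
      have hmod : S % 2 = k % 2 := by
        rw [hSdef, Finset.sum_nat_mod]
        have hall : ∀ i ∈ Finset.range k, p ^ i % 2 = 1 := fun i _ =>
          Nat.odd_iff.mp hpodd.pow
        rw [Finset.sum_congr rfl hall]
        simp
      rw [Nat.odd_iff, hmod, ← Nat.odd_iff]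
      exact hko
    have hSdvd : S ∣ 2 ^ (r-1) * q := ⟨p - 1, hSq.symm⟩
    have hScop : Nat.Coprime S (2 ^ (r-1)) :=
      Nat.Coprime.pow_right _ hSodd.coprime_two_right
    have hSq' : S ∣ q := Nat.Coprime.dvd_of_dvd_mul_left hScop hSdvd
    have hSbig : p ^ 2 ≤ S := by
      rw [hSdef]
      exact Finset.single_le_sum (f := fun i => p ^ i)
        (fun i _ => Nat.zero_le _) (by simp; omega)
    have hp9 : 9 ≤ p ^ 2 := by nlinarith
    rcases Nat.Prime.eq_one_or_self_of_dvd hmersenne S hSq' with hS1 | hSeq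
    · omega
    · -- S = q, so p - 1 = 2^(r-1)
      rw [hSeq] at hSq
      have hq0 : 0 < q := by omega
      have hpm1 : p - 1 = 2 ^ (r-1) :=
        Nat.eq_of_mul_eq_mul_left hq0 (hSq.trans (mul_comm _ _))
      have hpval : p = 2 ^ (r-1) + 1 := by omega
      have h2rr : 2 ^ r = 2 * 2 ^ (r-1) := by
        rw [← pow_succ']; congr 1; omega
      have hp2 : 2 ^ r + 1 ≤ p ^ 2 := by
        rw [hpval]
        have h1 : 1 ≤ 2 ^ (r-1) := Nat.one_le_two_pow
        nlinarith
      omega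
end

section
/- If p is an odd prime, k an even positive integer, and r ≥ 2 with 2^r - 1 prime, then p^k - 1 = 2^(r-1)(2^r - 1) has no solutions. -/
theorem no_even_exponent_solution
    (p k r : ℕ) (hp : p.Prime) (hodd : Odd p) (hk : 0 < k) (hke : Even k)
    (hr : 2 ≤ r) (hmersenne : Nat.Prime (2 ^ r - 1)) :
    p ^ k - 1 ≠ 2 ^ (r - 1) * (2 ^ r - 1) := by
  intro h
  obtain ⟨j, hj⟩ := hke
  have hj1 : 1 ≤ j := by omega
  have hp3 : 3 ≤ p := by
    obtain ⟨u, hu⟩ := hodd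
    have := hp.two_le
    omega
  set m := p ^ j with hmdef
  have hm3 : 3 ≤ m := le_trans hp3 (Nat.le_self_pow (by omega) p)
  have hpk : p ^ k = m * m := by rw [hj, pow_add]
  have h1 : 1 ≤ p ^ k := Nat.one_le_pow _ _ hp.pos
  have hm : m * m = 2 ^ (r - 1) * (2 ^ r - 1) + 1 := by omega
  rcases eq_or_lt_of_le hr with hr2 | hr3
  · -- r = 2 : m * m = 7
    rw [← hr2] at hm
    norm_num at hm
    nlinarith
  · -- r ≥ 3 : r is odd, else 3 ∣ 2^r - 1
    have hrodd : Odd r := by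
      by_contra he
      rw [Nat.not_odd_iff_even] at he
      obtain ⟨s, hs⟩ := he
      have hdvd : (3 : ℕ) ∣ 2 ^ r - 1 := by
        have h4 := Nat.sub_dvd_pow_sub_pow 4 1 s
        have : (4 : ℕ) ^ s = 2 ^ r := by
          rw [hs, ← two_mul, pow_mul]; norm_num
        simpa [this] using h4
      have h3 : (3 : ℕ) = 2 ^ r - 1 :=
        (Nat.prime_dvd_prime_iff_eq (by norm_num) hmersenne).mp hdvd
      have : 2 ^ 3 ≤ 2 ^ r := Nat.pow_le_pow_right (by norm_num) hr3
      omega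
    obtain ⟨t, ht⟩ := hrodd
    have hm' : m * m + 2 ^ (r - 1) = 2 ^ (r - 1) * 2 ^ r + 1 := by
      have h2r : 1 ≤ 2 ^ r := Nat.one_le_two_pow
      have : 2 ^ (r - 1) * (2 ^ r - 1) = 2 ^ (r - 1) * 2 ^ r - 2 ^ (r - 1) := by
        rw [Nat.mul_sub_one]
      have hle : 2 ^ (r - 1) ≤ 2 ^ (r - 1) * 2 ^ r := Nat.le_mul_of_pos_right _ (by positivity)
      omega
    have hsq : ((m : ZMod 3)) ^ 2 = 2 := by
      have hc := congrArg (Nat.cast : ℕ → ZMod 3) hm'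
      push_cast at hc
      have h41 : ((2 : ZMod 3)) ^ 2 = 1 := by decide
      have hrm1 : r - 1 = 2 * t := by omega
      have e1 : ((2 : ZMod 3)) ^ (r - 1) = 1 := by
        rw [hrm1, pow_mul, h41, one_pow]
      have e2 : ((2 : ZMod 3)) ^ r = 2 := by
        rw [ht, pow_add, pow_mul, h41, one_pow, pow_one, one_mul]
      rw [e1, e2] at hc
      rw [sq]
      linear_combination hc
    have : ∀ x : ZMod 3, x ^ 2 ≠ 2 := by decide
    exact this _ hsq
end

section
/- For any normal subgroup N of a finite group G, δ(G/N) ≤ δ(G). -/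
/-- Sum of the orders of all normal subgroups of `G`. -/
noncomputable def D (G : Type*) [Group G] : ℕ :=
  ∑ᶠ N ∈ {N : Subgroup G | N.Normal}, Nat.card N

lemma card_comap_mk' {G : Type*} [Group G] (N : Subgroup G) [N.Normal]
    (M : Subgroup (G ⧸ N)) :
    Nat.card (M.comap (QuotientGroup.mk' N)) = Nat.card N * Nat.card M := by
  have : (M.comap (QuotientGroup.mk' N) : Set G) = QuotientGroup.mk ⁻¹' (M : Set (G ⧸ N)) := rfl
  calc Nat.card (M.comap (QuotientGroup.mk' N))
      = Nat.card (QuotientGroup.mk ⁻¹' (M : Set (G ⧸ N))) := by rw [← this]; rfl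
    _ = Nat.card (N × (M : Set (G ⧸ N))) :=
        Nat.card_congr (QuotientGroup.preimageMkEquivSubgroupProdSet N (M : Set (G ⧸ N)))
    _ = Nat.card N * Nat.card M := Nat.card_prod _ _

lemma key {G : Type*} [Group G] [Finite G] (N : Subgroup G) [N.Normal] :
    Nat.card N * D (G ⧸ N) ≤ D G := by
  classical
  have : Finite (G ⧸ N) := Quotient.finite _
  have hfin : ({M : Subgroup (G ⧸ N) | M.Normal}).Finite := Set.toFinite _
  have hfin' : ({K : Subgroup G | K.Normal}).Finite := Set.toFinite _
  rw [D, D, finsum_mem_eq_finite_toFinset_sum _ hfin, finsum_mem_eq_finite_toFinset_sum _ hfin',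
    Finset.mul_sum]
  have hinj : Function.Injective (Subgroup.comap (QuotientGroup.mk' N)) :=
    Subgroup.comap_injective (QuotientGroup.mk'_surjective N)
  calc ∑ M ∈ hfin.toFinset, Nat.card N * Nat.card M
      = ∑ M ∈ hfin.toFinset, Nat.card (M.comap (QuotientGroup.mk' N)) := by
        refine Finset.sum_congr rfl fun M _ => (card_comap_mk' N M).symm
    _ = ∑ K ∈ hfin.toFinset.image (Subgroup.comap (QuotientGroup.mk' N)), Nat.card K := by
        rw [Finset.sum_image fun a _ b _ h => hinj h]
    _ ≤ ∑ K ∈ hfin'.toFinset, Nat.card K := by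
        apply Finset.sum_le_sum_of_subset
        intro K hK
        simp only [Finset.mem_image, Set.Finite.mem_toFinset, Set.mem_setOf_eq] at *
        obtain ⟨M, hM, rfl⟩ := hK
        exact hM.comap _

theorem delta_quotient_le (G : Type*) [Group G] [Finite G]
    (N : Subgroup G) [N.Normal] :
    (D (G ⧸ N) : ℚ) / (Nat.card (G ⧸ N) : ℚ) ≤ (D G : ℚ) / (Nat.card G : ℚ) := by
  have : Finite (G ⧸ N) := Quotient.finite _
  have hQ : (0 : ℚ) < Nat.card (G ⧸ N) := by exact_mod_cast Nat.card_pos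
  have hG : (0 : ℚ) < Nat.card G := by exact_mod_cast Nat.card_pos
  rw [div_le_div_iff₀ hQ hG]
  have hcard : Nat.card G = Nat.card (G ⧸ N) * Nat.card N :=
    (Subgroup.card_eq_card_quotient_mul_card_subgroup N)
  have hk : Nat.card N * D (G ⧸ N) ≤ D G := key N
  have : (D (G ⧸ N) : ℚ) * (Nat.card (G ⧸ N) * Nat.card N) ≤
      (D G : ℚ) * Nat.card (G ⧸ N) := by
    have := mul_le_mul_of_nonneg_right (by exact_mod_cast hk :
      (Nat.card N : ℚ) * D (G ⧸ N) ≤ D G) hQ.le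
    ring_nf
    ring_nf at this
    linarith
  calc (D (G ⧸ N) : ℚ) * Nat.card G
      = (D (G ⧸ N) : ℚ) * (Nat.card (G ⧸ N) * Nat.card N) := by
        rw [hcard]; push_cast; ring
    _ ≤ (D G : ℚ) * Nat.card (G ⧸ N) := this
end

section
/- A finite nilpotent group G satisfies D(G) = 2|G| + 1 (i.e., G is quasi-Leinster) if and only if G is cyclic and σ(|G|) = 2|G| + 1 (i.e., |G| is quasi-perfect). -/
/-!
If `G` is cyclic, its subgroups correspond to the divisors of `|G|` (the subgroup of order `d`
being the kernel of `x ↦ x ^ d`), so `D(G) = σ(|G|)`.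

If `G` is nilpotent but not cyclic, every cyclic subgroup `⟨g⟩` is proper, hence lies in a
maximal subgroup, and maximal subgroups of nilpotent groups are normal. Counting pairs `(g, N)`
with `g ∈ N ⊴ G`, every `g` then lies in at least two normal subgroups (`G` and a proper one),
and `1` lies in at least four, so `D(G) ≥ 2|G| + 2`.
-/

open ArithmeticFunction ArithmeticFunction.sigma

section

variable {G : Type*} [Group G]

theorem IsCyclic.eq_ker_powMonoidHom_card {A : Type*} [CommGroup A] [Finite A] [IsCyclic A]
    (H : Subgroup A) : H = (powMonoidHom (Nat.card H) : A →* A).ker := by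
  refine Subgroup.eq_of_le_of_card_ge (fun x hx => ?_) ?_
  · exact orderOf_dvd_iff_pow_eq_one.mp (H.orderOf_dvd_natCard hx)
  · rw [IsCyclic.card_powMonoidHom_ker, Nat.gcd_eq_right (Subgroup.card_subgroup_dvd_card H)]

theorem IsCyclic.D_eq_sigma_one [Finite G] [IsCyclic G] : D G = σ 1 (Nat.card G) := by
  let _ : CommGroup G := IsCyclic.commGroup
  have card_ker {d : ℕ} (hd : d ∈ (Nat.card G).divisors) :
      Nat.card (powMonoidHom d : G →* G).ker = d := by
    rw [IsCyclic.card_powMonoidHom_ker, Nat.gcd_eq_right (Nat.dvd_of_mem_divisors hd)]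
  rw [D, sigma_one_apply, ← finsum_mem_coe_finset]
  symm
  refine finsum_mem_eq_of_bijOn (fun d => (powMonoidHom d : G →* G).ker)
    ⟨fun d _ => MonoidHom.normal_ker _, fun d₁ h₁ d₂ h₂ h => ?_, fun N _ => ?_⟩
    fun d hd => (card_ker hd).symm
  · rw [← card_ker h₁, ← card_ker h₂]
    exact congrArg (fun N : Subgroup G => Nat.card N) h
  · refine ⟨Nat.card N, ?_, (IsCyclic.eq_ker_powMonoidHom_card N).symm⟩
    exact Nat.mem_divisors.mpr ⟨Subgroup.card_subgroup_dvd_card N, Nat.card_pos.ne'⟩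

theorem D_eq_sum_ncard_normal_mem [Fintype G] :
    D G = ∑ g : G, {N : Subgroup G | N.Normal ∧ g ∈ N}.ncard := by
  classical
  calc D G = ∑ N : Subgroup G with N.Normal, ∑ g : G, if g ∈ N then 1 else 0 := by
        rw [D, finsum_mem_eq_finite_toFinset_sum _ (Set.toFinite _)]
        refine Finset.sum_congr (by ext; simp) fun N _ => ?_
        rw [Finset.sum_boole, Nat.card_eq_fintype_card, Fintype.card_subtype]
        simp
    _ = ∑ g : G, {N : Subgroup G | N.Normal ∧ g ∈ N}.ncard := by
        rw [Finset.sum_comm]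
        refine Finset.sum_congr rfl fun g _ => ?_
        rw [Finset.sum_boole, Set.ncard_eq_toFinset_card', Finset.filter_filter]
        simp

theorem two_mul_card_add_one_lt_D [Finite G]
    (h : ∀ g : G, ∃ N : Subgroup G, N.Normal ∧ N ≠ ⊤ ∧ g ∈ N) :
    2 * Nat.card G + 1 < D G := by
  classical
  cases nonempty_fintype G
  obtain ⟨N₀, -, hN₀_top, -⟩ := h 1
  obtain ⟨x, hx⟩ := SetLike.exists_not_mem_of_ne_top N₀ hN₀_top
  obtain ⟨N₁, hN₁, hN₁_top, hxN₁⟩ := h x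
  obtain ⟨y, hy⟩ := SetLike.exists_not_mem_of_ne_top N₁ hN₁_top
  obtain ⟨N₂, hN₂, hN₂_top, hyN₂⟩ := h y
  have hN₁_bot : N₁ ≠ ⊥ := fun h => hx <| by
    rw [h, Subgroup.mem_bot] at hxN₁
    exact hxN₁ ▸ N₀.one_mem
  have hN₂_bot : N₂ ≠ ⊥ := fun h => hy <| by
    rw [h, Subgroup.mem_bot] at hyN₂
    exact hyN₂ ▸ N₁.one_mem
  have hN₁₂ : N₁ ≠ N₂ := fun h => hy (h ▸ hyN₂)
  have htop_bot : (⊤ : Subgroup G) ≠ ⊥ := fun h => hN₁_bot (le_bot_iff.mp (h ▸ le_top))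
  have count_le (g : G) :
      2 + (if g = 1 then 2 else 0) ≤ {N : Subgroup G | N.Normal ∧ g ∈ N}.ncard := by
    split_ifs with hg
    · subst hg
      calc 2 + 2 = ({⊤, ⊥, N₁, N₂} : Set (Subgroup G)).ncard := by
            rw [Set.ncard_insert_of_notMem, Set.ncard_insert_of_notMem, Set.ncard_pair hN₁₂]
            all_goals
              simp [htop_bot, hN₁_bot.symm, hN₂_bot.symm, hN₁_top.symm, hN₂_top.symm]
        _ ≤ _ := Set.ncard_le_ncard (by
            rintro N (rfl | rfl | rfl | rfl) <;> simp [hN₁, hN₂]) (Set.toFinite _)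
    · obtain ⟨N, hN, hN_top, hgN⟩ := h g
      calc 2 + 0 = ({⊤, N} : Set (Subgroup G)).ncard := (Set.ncard_pair hN_top.symm).symm
        _ ≤ _ := Set.ncard_le_ncard (by
            rintro N (rfl | rfl) <;> simp [hN, hgN]) (Set.toFinite _)
  calc 2 * Nat.card G + 1 < ∑ g : G, (2 + if g = 1 then 2 else 0) := by
        simp [Finset.sum_add_distrib, mul_comm]
    _ ≤ D G := D_eq_sum_ncard_normal_mem (G := G) ▸ Finset.sum_le_sum fun g _ => count_le g

theorem Group.IsNilpotent.exists_normal_ne_top_mem [Finite G] [Group.IsNilpotent G]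
    (hG : ¬IsCyclic G) (g : G) : ∃ N : Subgroup G, N.Normal ∧ N ≠ ⊤ ∧ g ∈ N := by
  obtain ⟨M, hM, hgM⟩ := (eq_top_or_exists_le_coatom (Subgroup.zpowers g)).resolve_left
    fun h => hG (isCyclic_iff_exists_zpowers_eq_top.mpr ⟨g, h⟩)
  exact ⟨M, Subgroup.NormalizerCondition.normal_of_coatom M
    Group.normalizerCondition_of_isNilpotent hM, hM.1, hgM (Subgroup.mem_zpowers g)⟩

end

theorem nilpotent_quasiLeinster_iff (G : Type*) [Group G] [Finite G]
    (hnil : Group.IsNilpotent G) :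
    D G = 2 * Nat.card G + 1 ↔
      IsCyclic G ∧ ArithmeticFunction.sigma 1 (Nat.card G) = 2 * Nat.card G + 1 := by
  refine ⟨fun hD => ?_, fun ⟨_, hσ⟩ => IsCyclic.D_eq_sigma_one.trans hσ⟩
  have hG : IsCyclic G := by
    by_contra hG
    have := two_mul_card_add_one_lt_D (Group.IsNilpotent.exists_normal_ne_top_mem hG)
    omega
  exact ⟨hG, IsCyclic.D_eq_sigma_one.symm.trans hD⟩
end

section
/- Let G be the nonabelian group of order pq, where p < q are primes with p dividing q - 1. Then D(G) = 1 + q + pq, and in particular G is neither almost Leinster nor quasi-Leinster, i.e., D(G) ≠ 2pq - 1 and D(G) ≠ 2pq + 1. -/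
section

variable {G : Type*} [Group G]

theorem isMulCommutative_of_disjoint {N M : Subgroup G} [N.Normal] [M.Normal]
    [IsMulCommutative (G ⧸ N)] [IsMulCommutative (G ⧸ M)] (h : Disjoint N M) :
    IsMulCommutative G := by
  refine ⟨⟨fun a b => ?_⟩⟩
  have hN : (a * b)⁻¹ * (b * a) ∈ N :=
    QuotientGroup.eq.mp (by simp only [QuotientGroup.mk_mul, mul_comm' (a : G ⧸ N)])
  have hM : (a * b)⁻¹ * (b * a) ∈ M :=
    QuotientGroup.eq.mp (by simp only [QuotientGroup.mk_mul, mul_comm' (a : G ⧸ M)])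
  exact inv_mul_eq_one.mp (Subgroup.disjoint_def.mp h hN hM)

theorem D_eq_of_normal_eq_bot_or_eq_or_eq_top (Q : Subgroup G) [Q.Normal]
    (hbot : Q ≠ ⊥) (htop : Q ≠ ⊤) (h : ∀ N : Subgroup G, N.Normal → N = ⊥ ∨ N = Q ∨ N = ⊤) :
    D G = 1 + Nat.card Q + Nat.card G := by
  classical
  have hset : {N : Subgroup G | N.Normal} = ↑({⊥, Q, ⊤} : Finset (Subgroup G)) := by
    ext N
    simp only [Set.mem_ofPred_eq, Finset.coe_insert, Finset.coe_singleton, Set.mem_insert_iff,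
      Set.mem_singleton_iff]
    refine ⟨h N, ?_⟩
    rintro (rfl | rfl | rfl) <;> infer_instance
  have hbot_top : (⊥ : Subgroup G) ≠ ⊤ := fun h => hbot (eq_bot_iff.mpr (h ▸ le_top))
  rw [D, hset, finsum_mem_coe_finset, Finset.sum_insert (by simp [hbot.symm, hbot_top]),
    Finset.sum_pair htop, Subgroup.card_bot, Subgroup.card_top, add_assoc]

variable [Finite G]

theorem Subgroup.index_eq_of_card_eq_mul {m n : ℕ} (hcard : Nat.card G = m * n)
    {H : Subgroup G} (hH : Nat.card H = n) : H.index = m := by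
  have h := H.card_mul_index
  rw [hH, hcard, mul_comm m] at h
  exact Nat.eq_of_mul_eq_mul_left (hH ▸ Nat.card_pos) h

variable {p q : ℕ} [hp : Fact p.Prime] [hq : Fact q.Prime]

theorem isMulCommutative_of_normal_of_card_eq_mul (hpq : p ≠ q) (hcard : Nat.card G = p * q)
    {N M : Subgroup G} [N.Normal] [M.Normal] (hN : Nat.card N = p) (hM : Nat.card M = q) :
    IsMulCommutative G := by
  have : IsCyclic (G ⧸ N) :=
    isCyclic_of_prime_card (Subgroup.index_eq_of_card_eq_mul (hcard.trans (mul_comm p q)) hN)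
  have : IsCyclic (G ⧸ M) := isCyclic_of_prime_card (Subgroup.index_eq_of_card_eq_mul hcard hM)
  refine isMulCommutative_of_disjoint (N := N) (M := M) (Subgroup.disjoint_of_coprime_natCard ?_)
  rw [hN, hM]
  exact (Nat.coprime_primes hp.out hq.out).mpr hpq

theorem Sylow.exists_coe_eq_of_card_eq_mul (hpq : p ≠ q) (hcard : Nat.card G = p * q)
    {H : Subgroup G} (hH : Nat.card H = q) : ∃ P : Sylow q G, (P : Subgroup G) = H := by
  have hindex : ¬ q ∣ H.index := by
    rw [Subgroup.index_eq_of_card_eq_mul hcard hH, Nat.prime_dvd_prime_iff_eq hq.out hp.out]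
    exact hpq.symm
  exact ⟨(IsPGroup.of_card (n := 1) (by rw [hH, pow_one])).toSylow hindex, rfl⟩

theorem Sylow.subsingleton_of_card_eq_mul (hlt : p < q) (hcard : Nat.card G = p * q) :
    Subsingleton (Sylow q G) := by
  obtain ⟨Q⟩ : Nonempty (Sylow q G) := inferInstance
  have hindex : (Q : Subgroup G).index ∣ p :=
    ((Nat.Prime.coprime_iff_not_dvd hq.out).mpr Q.not_dvd_index).symm.dvd_of_dvd_mul_right
      (hcard ▸ Subgroup.index_dvd_card _)
  have hmod : Nat.card (Sylow q G) % q = 1 % q := card_sylow_modEq_one q G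
  rcases (Nat.dvd_prime hp.out).mp ((Q.card_dvd_index).trans hindex) with h | h
  · exact (Nat.card_eq_one_iff_unique.mp h).1
  · rw [h, Nat.mod_eq_of_lt hlt, Nat.mod_eq_of_lt hq.out.one_lt] at hmod
    exact absurd hmod hp.out.one_lt.ne'

theorem Subgroup.normal_of_card_eq_mul (hlt : p < q) (hcard : Nat.card G = p * q)
    {H : Subgroup G} (hH : Nat.card H = q) : H.Normal := by
  have := Sylow.subsingleton_of_card_eq_mul hlt hcard
  obtain ⟨P, rfl⟩ := Sylow.exists_coe_eq_of_card_eq_mul hlt.ne hcard hH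
  exact P.normal_of_subsingleton

theorem Subgroup.eq_of_card_eq_mul (hlt : p < q) (hcard : Nat.card G = p * q)
    {H K : Subgroup G} (hH : Nat.card H = q) (hK : Nat.card K = q) : H = K := by
  have := Sylow.subsingleton_of_card_eq_mul hlt hcard
  obtain ⟨P, rfl⟩ := Sylow.exists_coe_eq_of_card_eq_mul hlt.ne hcard hH
  obtain ⟨P', rfl⟩ := Sylow.exists_coe_eq_of_card_eq_mul hlt.ne hcard hK
  rw [Subsingleton.elim P P']

theorem Subgroup.normal_eq_bot_or_eq_or_eq_top (hlt : p < q) (hcard : Nat.card G = p * q)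
    (hG : ¬ IsMulCommutative G) {Q : Subgroup G} (hQ : Nat.card Q = q)
    (N : Subgroup G) [N.Normal] : N = ⊥ ∨ N = Q ∨ N = ⊤ := by
  obtain ⟨a, b, ha, hb, hN⟩ := Nat.dvd_mul.mp (hcard ▸ N.card_subgroup_dvd_card)
  rcases (Nat.dvd_prime hp.out).mp ha with rfl | rfl <;>
    rcases (Nat.dvd_prime hq.out).mp hb with rfl | rfl
  · exact Or.inl (Subgroup.card_eq_one.mp (by rw [← hN]))
  · exact Or.inr (Or.inl (Subgroup.eq_of_card_eq_mul hlt hcard (by rw [← hN, one_mul]) hQ))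
  · have := Subgroup.normal_of_card_eq_mul hlt hcard hQ
    exact absurd (isMulCommutative_of_normal_of_card_eq_mul hlt.ne hcard
      (N := N) (by rw [← hN, mul_one]) hQ) hG
  · exact Or.inr (Or.inr ((Subgroup.card_eq_iff_eq_top N).mp (hN.symm.trans hcard.symm)))

end

theorem nonabelian_pq_D_general (G : Type*) [Group G] [Finite G]
    (p q : ℕ) (hp : p.Prime) (hq : q.Prime) (hlt : p < q)
    (hcard : Nat.card G = p * q) (hna : ¬ ∀ a b : G, a * b = b * a) :
    D G = 1 + q + p * q ∧ D G ≠ 2 * (p * q) - 1 ∧ D G ≠ 2 * (p * q) + 1 := by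
  have := Fact.mk hp
  have := Fact.mk hq
  have hG : ¬ IsMulCommutative G := fun h => hna mul_comm'
  obtain ⟨Q, hQ⟩ := Sylow.exists_subgroup_card_pow_prime (G := G) q (n := 1) (by simp [hcard])
  rw [pow_one] at hQ
  have := Subgroup.normal_of_card_eq_mul hlt hcard hQ
  have hQbot : Q ≠ ⊥ := fun h => hq.one_lt.ne' (by rw [← hQ, h, Subgroup.card_bot])
  have hQtop : Q ≠ ⊤ := fun h => by
    rw [h, Subgroup.card_top, hcard] at hQ
    exact hp.one_lt.ne' (Nat.eq_of_mul_eq_mul_right hq.pos (hQ.trans (one_mul q).symm))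
  have hD : D G = 1 + q + p * q := by
    rw [D_eq_of_normal_eq_bot_or_eq_or_eq_top Q hQbot hQtop
      (fun N _ => Subgroup.normal_eq_bot_or_eq_or_eq_top hlt hcard hG hQ N), hQ, hcard]
  have : 2 * q ≤ p * q := Nat.mul_le_mul_right q hp.two_le
  have := hp.two_le
  refine ⟨hD, ?_, ?_⟩ <;> omega

theorem nonabelian_pq_D (G : Type*) [Group G] [Finite G]
    (p q : ℕ) (hp : p.Prime) (hq : q.Prime) (hlt : p < q) (hdvd : p ∣ q - 1)
    (hcard : Nat.card G = p * q) (hna : ¬ ∀ a b : G, a * b = b * a) :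
    D G = 1 + q + p * q ∧ D G ≠ 2 * (p * q) - 1 ∧ D G ≠ 2 * (p * q) + 1 :=
  nonabelian_pq_D_general G p q hp hq hlt hcard hna
end

section
/- For the affine group Aff(F_q) = F_q ⋊ F_q^* over a finite field with q elements, q ≥ 2, we have D(Aff(F_q)) = 1 + q·σ(q - 1). -/
def AddAut.toMulAutMultiplicative (α : Type*) [AddGroup α] :
    Multiplicative (AddAut α) →* MulAut (Multiplicative α) where
  toFun f := AddEquiv.toMultiplicative (Multiplicative.toAdd f)
  map_one' := rfl
  map_mul' _ _ := rfl

/-- The affine group `F ⋊ Fˣ` of a field `F`. -/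
abbrev AffGroup (F : Type*) [Field F] :=
  SemidirectProduct (Multiplicative F) Fˣ
    ((AddAut.toMulAutMultiplicative F).comp (DistribMulAction.toAddAut Fˣ F))

/-!
A nontrivial normal subgroup `N` of `F ⋊ Fˣ` contains a nontrivial translation: either some
`g ∈ N, g ≠ 1` is one, or `g` has a nontrivial dilation part `a` and the commutator of a
translation by `t` with `g` is the translation by `(1 - a) t`. Conjugating by dilations then puts
every translation into `N`, so `N` is the preimage of a subgroup `H ≤ Fˣ`, of order `q |H|`.
Since `Fˣ` is cyclic of order `q - 1`, it has exactly one subgroup of each order `d ∣ q - 1`,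
and summing gives `1 + q σ(q - 1)`.
-/

open Subgroup SemidirectProduct
open scoped commutatorElement

namespace IsCyclic

variable {G : Type*} [CommGroup G] [IsCyclic G] [Finite G]

theorem eq_ker_powMonoidHom_card_s13 (H : Subgroup G) :
    H = (powMonoidHom (Nat.card H) : G →* G).ker := by
  refine eq_of_le_of_card_ge (fun x hx => ?_) ?_
  · exact congrArg Subtype.val (pow_card_eq_one' (G := H) (x := ⟨x, hx⟩))
  · rw [card_powMonoidHom_ker, Nat.gcd_eq_right (card_subgroup_dvd_card H)]

theorem finsum_card_subgroup :
    ∑ᶠ H : Subgroup G, Nat.card H = ArithmeticFunction.sigma 1 (Nat.card G) := by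
  have := Fintype.ofFinite (Subgroup G)
  rw [finsum_eq_sum_of_fintype, ArithmeticFunction.sigma_one_apply]
  refine Finset.sum_nbij' (fun H => Nat.card H) (fun d => (powMonoidHom d : G →* G).ker)
    (fun H _ => Nat.mem_divisors.2 ⟨card_subgroup_dvd_card H, Nat.card_pos.ne'⟩)
    (fun _ _ => Finset.mem_univ _) (fun H _ => (eq_ker_powMonoidHom_card_s13 H).symm)
    (fun d hd => ?_) (fun _ _ => rfl)
  rw [card_powMonoidHom_ker, Nat.gcd_eq_right (Nat.dvd_of_mem_divisors hd)]

end IsCyclic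

theorem SemidirectProduct.card_comap_rightHom {N G : Type*} [Group N] [Group G]
    {φ : G →* MulAut N} (H : Subgroup G) :
    Nat.card (H.comap (rightHom : N ⋊[φ] G →* G)) = Nat.card N * Nat.card H := by
  rw [← Nat.card_prod]
  exact Nat.card_congr
    { toFun := fun p => (p.1.left, ⟨p.1.right, p.2⟩)
      invFun := fun q => ⟨⟨q.1, q.2.1⟩, q.2.2⟩
      left_inv := fun _ => rfl
      right_inv := fun _ => rfl }

namespace AffGroup

variable {F : Type*} [Field F]

theorem action_apply (u : Fˣ) (b : Multiplicative F) :
    ((AddAut.toMulAutMultiplicative F).comp (DistribMulAction.toAddAut Fˣ F)) u b =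
      Multiplicative.ofAdd (u * b.toAdd) :=
  rfl

theorem inr_mul_inl_mul_inv (u : Fˣ) (b : F) :
    (inr u * inl (.ofAdd b) * (inr u)⁻¹ : AffGroup F) = inl (.ofAdd (u * b)) := by
  rw [← map_inv, ← inl_aut]
  rfl

theorem commutatorElement_inl (t : F) (g : AffGroup F) :
    ⁅(inl (Multiplicative.ofAdd t) : AffGroup F), g⁆ =
      inl (Multiplicative.ofAdd ((1 - g.right) * t)) := by
  ext
  · simp only [commutatorElement_def, mul_left, inv_left, mul_right, inv_right, left_inl,
      right_inl, action_apply, toAdd_mul, toAdd_inv, toAdd_ofAdd, one_mul, inv_one, mul_one,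
      Units.val_one, Units.mul_inv_cancel_left]
    ring
  · simp [commutatorElement_def]

theorem exists_inl_mem_of_ne_bot {N : Subgroup (AffGroup F)} (hN : N.Normal) (hbot : N ≠ ⊥) :
    ∃ b : F, b ≠ 0 ∧ inl (.ofAdd b) ∈ N := by
  obtain ⟨g, hgN, hg⟩ := N.bot_or_exists_ne_one.resolve_left hbot
  by_cases hright : g.right = 1
  · have hg_inl : g = inl (.ofAdd g.left.toAdd) := by ext <;> simp [hright]
    refine ⟨g.left.toAdd, fun h => hg ?_, hg_inl ▸ hgN⟩
    rw [hg_inl, h, ofAdd_zero, map_one]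
  · refine ⟨(1 - g.right) * 1, ?_, ?_⟩
    · rwa [mul_one, sub_ne_zero, ne_comm, Ne, Units.val_eq_one]
    · rw [← commutatorElement_inl, commutatorElement_def]
      exact mul_mem (hN.conj_mem g hgN _) (inv_mem hgN)

theorem ker_rightHom_le {N : Subgroup (AffGroup F)} (hN : N.Normal) (hbot : N ≠ ⊥) :
    (rightHom : AffGroup F →* Fˣ).ker ≤ N := by
  obtain ⟨b, hb, hbN⟩ := exists_inl_mem_of_ne_bot hN hbot
  rw [← range_inl_eq_ker_rightHom]
  rintro _ ⟨c, rfl⟩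
  obtain hc | hc := eq_or_ne c.toAdd 0
  · rw [← ofAdd_toAdd c, hc, ofAdd_zero, map_one]
    exact N.one_mem
  · have hconj := hN.conj_mem _ hbN (inr (Units.mk0 (c.toAdd / b) (div_ne_zero hc hb)))
    rwa [inr_mul_inl_mul_inv, Units.val_mk0, div_mul_cancel₀ _ hb, ofAdd_toAdd] at hconj

theorem comap_rightHom_ne_bot (H : Subgroup Fˣ) : H.comap (rightHom : AffGroup F →* Fˣ) ≠ ⊥ := by
  intro h
  have hker := ker_le_comap (rightHom : AffGroup F →* Fˣ) H
  rw [h, ← range_inl_eq_ker_rightHom, le_bot_iff, MonoidHom.range_eq_bot_iff] at hker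
  have h1 := inl_injective (DFunLike.congr_fun hker (Multiplicative.ofAdd (1 : F)))
  exact one_ne_zero (congrArg Multiplicative.toAdd h1)

theorem setOf_normal :
    {N : Subgroup (AffGroup F) | N.Normal} =
      insert ⊥ (Set.range (comap (rightHom : AffGroup F →* Fˣ))) := by
  ext N
  refine ⟨fun hN => ?_, ?_⟩
  · refine or_iff_not_imp_left.2 fun hbot => ⟨N.map rightHom, ?_⟩
    rw [comap_map_eq, sup_eq_left.2 (ker_rightHom_le hN hbot)]
  · rintro (rfl | ⟨H, rfl⟩)
    exacts [normal_bot, (normal_of_isMulCommutative H).comap _]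

end AffGroup

theorem D_affGroup (F : Type*) [Field F] [Fintype F] :
    D (AffGroup F) = 1 + Fintype.card F * ArithmeticFunction.sigma 1 (Fintype.card F - 1) := by
  have hbot : ⊥ ∉ Set.range (comap (rightHom : AffGroup F →* Fˣ)) := by
    rintro ⟨H, hH⟩
    exact AffGroup.comap_rightHom_ne_bot H hH
  rw [D, AffGroup.setOf_normal, finsum_mem_insert _ hbot (Set.finite_range _),
    finsum_mem_range (comap_injective rightHom_surjective)]
  simp only [card_comap_rightHom, card_bot]
  rw [← mul_finsum, IsCyclic.finsum_card_subgroup, Nat.card_units]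
  simp only [Nat.card_eq_fintype_card, Fintype.card_multiplicative]
end

section
/- For q ≥ 2, the equation 1 + q·σ(q - 1) = 2q(q - 1) has no solutions; hence no affine group Aff(F_q) is Leinster. -/
/-!
Both parts are congruences modulo `q`. First, `1 + q σ(q - 1) ≡ 1` while `2q(q - 1) ≡ 0`.
Second, the translation subgroup of `Aff(F)` lies in every nontrivial normal subgroup `N`: a
non-translation in `N` has a nontrivial translation as commutator with a translation, and the
dilations conjugate one nontrivial translation onto all of them. Hence every term of `D` except
the one for `⊥` is divisible by `q = |F|`, so `D ≡ 1`, whereas `q` divides `|Aff(F)|`.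
-/

open SemidirectProduct Multiplicative

instance SemidirectProduct.finite {N G : Type*} [Group N] [Group G] {φ : G →* MulAut N}
    [Finite N] [Finite G] : Finite (N ⋊[φ] G) :=
  Finite.of_injective (fun x => (x.left, x.right)) fun _ _ h =>
    SemidirectProduct.ext (congrArg Prod.fst h) (congrArg Prod.snd h)

theorem one_add_ne_of_dvd {q m n : ℕ} (hq : 1 < q) (hm : q ∣ m) (hn : q ∣ n) : 1 + m ≠ n := by
  rintro rfl
  exact hq.ne' (Nat.dvd_one.mp ((Nat.dvd_add_left hm).mp hn))

theorem D_eq_one_add_finsum (G : Type*) [Group G] [Finite G] :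
    D G = 1 + ∑ᶠ N ∈ {N : Subgroup G | N.Normal} \ {⊥}, Nat.card N := by
  rw [D, ← finsum_mem_add_sdiff (t := {N : Subgroup G | N.Normal})
    (Set.singleton_subset_iff.mpr Subgroup.normal_bot) (Set.toFinite _), finsum_mem_singleton,
    Subgroup.card_bot]

theorem D_ne_mul_card_of_le_normal {G : Type*} [Group G] [Finite G] {T : Subgroup G}
    (hT : T ≠ ⊥) (hle : ∀ N : Subgroup G, N.Normal → N ≠ ⊥ → T ≤ N) (k : ℕ) :
    D G ≠ k * Nat.card G := by
  rw [D_eq_one_add_finsum]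
  refine one_add_ne_of_dvd ((Subgroup.one_lt_card_iff_ne_bot T).mpr hT) ?_
    (T.card_subgroup_dvd_card.mul_left k)
  exact finsum_mem_induction _ (dvd_zero _) (fun _ _ => dvd_add) fun N hN =>
    Subgroup.card_dvd_of_le (hle N hN.1 hN.2)

namespace AffGroup

variable {F : Type*} [Field F]

variable (F) in
def translations : Subgroup (AffGroup F) := (inl : Multiplicative F →* AffGroup F).range

theorem act_apply (b : Fˣ) (a : Multiplicative F) :
    ((AddAut.toMulAutMultiplicative F).comp (DistribMulAction.toAddAut Fˣ F)) b a =
      ofAdd ((b : F) * a.toAdd) :=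
  rfl

theorem conj_inl (g : AffGroup F) (x : F) :
    g * inl (ofAdd x) * g⁻¹ = inl (ofAdd (g.right * x)) := by
  ext
  · simp only [mul_left, inv_left, mul_right, left_inl, right_inl, mul_one, act_apply,
      toAdd_mul, toAdd_inv, toAdd_ofAdd, Units.mul_inv_cancel_left]
    abel
  · simp

theorem inl_mem_of_inl_mem {N : Subgroup (AffGroup F)} (hN : N.Normal) {a : F} (ha : a ≠ 0)
    (haN : inl (ofAdd a) ∈ N) (x : F) : inl (ofAdd x) ∈ N := by
  by_cases hx : x = 0
  · simp [hx]
  have := hN.conj_mem _ haN (inr (Units.mk0 (x / a) (div_ne_zero hx ha)))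
  rwa [conj_inl, right_inr, Units.val_mk0, div_mul_cancel₀ x ha] at this

theorem exists_inl_mem {N : Subgroup (AffGroup F)} (hN : N.Normal) (hbot : N ≠ ⊥) :
    ∃ a : F, a ≠ 0 ∧ inl (ofAdd a) ∈ N := by
  obtain ⟨g, hg, hg1⟩ := N.bot_or_exists_ne_one.resolve_left hbot
  by_cases hb : g.right = 1
  · have hg_eq : g = inl g.left := SemidirectProduct.ext rfl hb
    refine ⟨g.left.toAdd, fun h => hg1 ?_, hg_eq ▸ hg⟩
    rw [hg_eq, toAdd_eq_zero.mp h, map_one]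
  · refine ⟨1 - g.right, sub_ne_zero.mpr fun h => hb (Units.ext h.symm), ?_⟩
    have hcomm : inl (ofAdd 1) * g * (inl (ofAdd 1))⁻¹ * g⁻¹ ∈ N :=
      mul_mem (hN.conj_mem g hg _) (inv_mem hg)
    suffices inl (ofAdd (1 - (g.right : F))) = inl (ofAdd 1) * g * (inl (ofAdd 1))⁻¹ * g⁻¹ from
      this ▸ hcomm
    calc inl (ofAdd (1 - (g.right : F)))
        = inl (ofAdd 1) * (g * inl (ofAdd (-1)) * g⁻¹) := by
          rw [conj_inl, ← map_mul, ← ofAdd_add, mul_neg_one, sub_eq_add_neg]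
      _ = inl (ofAdd 1) * g * (inl (ofAdd 1))⁻¹ * g⁻¹ := by
          rw [ofAdd_neg, map_inv]; group

theorem translations_le {N : Subgroup (AffGroup F)} (hN : N.Normal) (hbot : N ≠ ⊥) :
    translations F ≤ N := by
  rintro _ ⟨x, rfl⟩
  obtain ⟨a, ha, haN⟩ := exists_inl_mem hN hbot
  exact inl_mem_of_inl_mem hN ha haN x.toAdd

theorem translations_ne_bot : translations F ≠ ⊥ := by
  rw [translations, Ne, MonoidHom.range_eq_bot_iff]
  exact fun h => one_ne_zero (ofAdd.injective (inl_injective (DFunLike.congr_fun h (ofAdd 1))))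

end AffGroup

theorem no_leinster_affine :
    (∀ q : ℕ, 2 ≤ q → 1 + q * ArithmeticFunction.sigma 1 (q - 1) ≠ 2 * q * (q - 1)) ∧
    (∀ (F : Type) [Field F] [Fintype F], D (AffGroup F) ≠ 2 * Nat.card (AffGroup F)) := by
  refine ⟨fun q hq => ?_, fun F _ _ => ?_⟩
  · exact one_add_ne_of_dvd hq (dvd_mul_right q _) ((dvd_mul_left q 2).mul_right _)
  · exact D_ne_mul_card_of_le_normal AffGroup.translations_ne_bot
      (fun _ => AffGroup.translations_le) 2
end
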